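/- arXiv:2203.03738 — 2 statements merged into one kernel-verified Lean document; each statement's English description precedes it below -/
import Mathlib

section
/- Let Ωₜ satisfy the standing regularity assumptions and let Φ, Ψ be C¹,¹ diffeomorphisms as in the setting. Then the matrix B(t,y) := DΨ(t,Φ(t,y)) DΨ(t,Φ(t,y))ᵀ − ∂ₜΨ(t,Φ(t,y)) ⊗ ∂ₜΨ(t,Φ(t,y)) is symmetric, and if moreover |∂ₜΦ(t,y)| < 1 for all (t,y) ∈ [0,T]×closure(Ω₀), then B is uniformly elliptic: there exists c_B > 0 such that (B(t,y)w)·w ≥ c_B |w|² for all w ∈ ℝᴺ and all (t,y). -/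
/-!
Write `D = DΨ(t, Φ(t,y))`, `P = DΦ(t,y)` and `w = ∂ₜΦ(t,y)`. Differentiating `Ψ(t, Φ(t,y)) = y` in
`y` and in `t` gives `D P = 1` and `∂ₜΨ(t, Φ(t,y)) = -D w`, hence
`(B v)·v = |Dᵀv|² - (w·Dᵀv)² ≥ (1 - |w|²) |Dᵀv|²`, while `|v| = |Pᵀ Dᵀ v| ≤ ‖P‖ |Dᵀv|`.
By compactness of `[0,T] × closure Ω₀` and continuity of `DΦ`, `|w|²` stays below `1 - δ` and `‖P‖`
stays below some `M`, so `B` is elliptic with constant `δ / M²`.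
-/

open Set Filter Topology ContinuousLinearMap
open scoped RealInnerProductSpace InnerProduct

section Adjoint

variable {E F : Type*} [NormedAddCommGroup E] [InnerProductSpace ℝ E] [CompleteSpace E]
  [NormedAddCommGroup F] [InnerProductSpace ℝ F] [CompleteSpace F]

theorem inner_apply_adjoint_sub_smul_comm (D : F →L[ℝ] E) (u v w : E) :
    ⟪D ((D†) v) - ⟪u, v⟫ • u, w⟫ = ⟪v, D ((D†) w) - ⟪u, w⟫ • u⟫ := by
  rw [inner_sub_left, inner_sub_right, real_inner_smul_left, real_inner_smul_right,
    ← adjoint_inner_right D, adjoint_inner_left, real_inner_comm u v]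
  ring

theorem inner_apply_adjoint_sub_smul_self (D : F →L[ℝ] E) (u v : E) :
    ⟪D ((D†) v) - ⟪u, v⟫ • u, v⟫ = ‖(D†) v‖ ^ 2 - ⟪u, v⟫ ^ 2 := by
  rw [inner_sub_left, real_inner_smul_left, ← adjoint_inner_right D,
    real_inner_self_eq_norm_sq]
  ring

theorem norm_le_opNorm_mul_norm_adjoint_of_comp_eq_id {D : F →L[ℝ] E} {P : E →L[ℝ] F}
    (h : D ∘L P = ContinuousLinearMap.id ℝ E) (v : E) : ‖v‖ ≤ ‖P‖ * ‖(D†) v‖ :=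
  calc ‖v‖ = ‖(P†) ((D†) v)‖ := by rw [← comp_apply, ← adjoint_comp, h, adjoint_id, id_apply]
    _ ≤ ‖P†‖ * ‖(D†) v‖ := le_opNorm _ _
    _ = ‖P‖ * ‖(D†) v‖ := by rw [LinearIsometryEquiv.norm_map]

theorem div_sq_mul_norm_sq_le_inner_apply_adjoint_sub_smul {D : F →L[ℝ] E} {P : E →L[ℝ] F}
    (h : D ∘L P = ContinuousLinearMap.id ℝ E) {w : F} {u : E} (hu : u = -D w) {δ M : ℝ} (hδ : 0 ≤ δ)
    (hw : ‖w‖ ^ 2 ≤ 1 - δ) (hM : 0 < M) (hP : ‖P‖ ≤ M) (v : E) :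
    δ / M ^ 2 * ‖v‖ ^ 2 ≤ ⟪D ((D†) v) - ⟪u, v⟫ • u, v⟫ := by
  set a := (D†) v
  have hua : ⟪u, v⟫ = -⟪w, a⟫ := by rw [hu, inner_neg_left, adjoint_inner_right]
  have hwa : ⟪w, a⟫ ^ 2 ≤ ‖w‖ ^ 2 * ‖a‖ ^ 2 := by
    rw [← mul_pow, ← sq_abs]
    exact pow_le_pow_left₀ (abs_nonneg _) (abs_real_inner_le_norm w a) 2
  have hva : ‖v‖ ^ 2 ≤ M ^ 2 * ‖a‖ ^ 2 := by
    rw [← mul_pow]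
    exact pow_le_pow_left₀ (norm_nonneg v)
      ((norm_le_opNorm_mul_norm_adjoint_of_comp_eq_id h v).trans (by gcongr)) 2
  rw [inner_apply_adjoint_sub_smul_self, hua, neg_sq]
  calc δ / M ^ 2 * ‖v‖ ^ 2 ≤ δ / M ^ 2 * (M ^ 2 * ‖a‖ ^ 2) := by gcongr
    _ = δ * ‖a‖ ^ 2 := by field_simp
    _ ≤ ‖a‖ ^ 2 - ⟪w, a⟫ ^ 2 := by nlinarith [sq_nonneg ‖a‖]

end Adjoint

section Slices

variable {E F : Type*} [NormedAddCommGroup E] [NormedSpace ℝ E]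
  [NormedAddCommGroup F] [NormedSpace ℝ F]

theorem HasFDerivAt.hasDerivAt_slice_left {f : ℝ → E → F} {L : ℝ × E →L[ℝ] F} {t : ℝ} {x : E}
    (h : HasFDerivAt (fun p : ℝ × E => f p.1 p.2) L (t, x)) :
    HasDerivAt (fun s => f s x) (L (1, 0)) t :=
  (h.comp_hasDerivAt t ((hasDerivAt_id t).prodMk (hasDerivAt_const t x)) :)

theorem HasFDerivAt.hasFDerivAt_slice_right {f : ℝ → E → F} {L : ℝ × E →L[ℝ] F} {t : ℝ} {x : E}
    (h : HasFDerivAt (fun p : ℝ × E => f p.1 p.2) L (t, x)) :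
    HasFDerivAt (f t) (L ∘L inr ℝ ℝ E) x :=
  h.comp x (hasFDerivAt_prodMk_right t x)

theorem ContDiffAt.slice_right {f : ℝ → E → F} {t : ℝ} {x : E} {n : WithTop ℕ∞}
    (h : ContDiffAt ℝ n (fun p : ℝ × E => f p.1 p.2) (t, x)) : ContDiffAt ℝ n (f t) x :=
  h.comp x (contDiffAt_const.prodMk contDiffAt_id)

theorem deriv_eq_neg_fderiv_deriv_of_leftInverse {f : ℝ → E → F} {g : ℝ → F → E} {s : Set ℝ}
    {t : ℝ} {x : E} (hs : UniqueDiffWithinAt ℝ s t) (ht : t ∈ s)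
    (hinv : ∀ r ∈ s, g r (f r x) = x)
    (hg : DifferentiableAt ℝ (fun p : ℝ × F => g p.1 p.2) (t, f t x))
    (hf : DifferentiableAt ℝ (fun r => f r x) t) :
    deriv (fun r => g r (f t x)) t = -fderiv ℝ (g t) (f t x) (deriv (fun r => f r x) t) := by
  set L := fderiv ℝ (fun p : ℝ × F => g p.1 p.2) (t, f t x)
  set w := deriv (fun r => f r x) t
  have hL : HasFDerivAt (fun p : ℝ × F => g p.1 p.2) L (t, f t x) := hg.hasFDerivAt
  have hcomp : HasDerivAt (fun r => g r (f r x)) (L (1, w)) t :=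
    (hL.comp_hasDerivAt t ((hasDerivAt_id t).prodMk hf.hasDerivAt) :)
  have hzero : L (1, w) = 0 :=
    hs.eq_deriv _ hcomp.hasDerivWithinAt ((hasDerivWithinAt_const t s x).congr hinv (hinv t ht))
  have hsplit : ((1 : ℝ), w) = (1, 0) + (0, w) := by simp
  rw [hL.hasDerivAt_slice_left.deriv, hL.hasFDerivAt_slice_right.fderiv]
  rw [hsplit, map_add] at hzero
  exact eq_neg_of_add_eq_zero_left hzero

theorem fderiv_comp_fderiv_eq_id_of_leftInvOn {f : E → F} {g : F → E} {U : Set E}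
    (hU : IsOpen U) (hinv : ∀ z ∈ U, g (f z) = z) {y : E} (hy : y ∈ closure U)
    (hf : ContDiffAt ℝ 1 f y) (hg : ContDiffAt ℝ 1 g (f y)) :
    fderiv ℝ g (f y) ∘L fderiv ℝ f y = ContinuousLinearMap.id ℝ E := by
  have hcont : ContinuousAt (fun z => fderiv ℝ g (f z) ∘L fderiv ℝ f z) y :=
    ((hg.continuousAt_fderiv one_ne_zero).comp hf.continuousAt).clm_comp
      (hf.continuousAt_fderiv one_ne_zero)
  have hf' : ∀ᶠ z in 𝓝 y, DifferentiableAt ℝ f z :=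
    (hf.eventually (by simp)).mono fun _ h => h.differentiableAt one_ne_zero
  have hg' : ∀ᶠ z in 𝓝 y, DifferentiableAt ℝ g (f z) :=
    hf.continuousAt.eventually ((hg.eventually (by simp)).mono fun _ h =>
      h.differentiableAt one_ne_zero)
  have hloc : ∀ᶠ z in 𝓝[U] y, fderiv ℝ g (f z) ∘L fderiv ℝ f z = ContinuousLinearMap.id ℝ E := by
    filter_upwards [self_mem_nhdsWithin, nhdsWithin_le_nhds (hf'.and hg')]
      with z hzU ⟨hfz, hgz⟩
    have heq : g ∘ f =ᶠ[𝓝 z] _root_.id := eventuallyEq_of_mem (hU.mem_nhds hzU) hinv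
    exact (hgz.hasFDerivAt.comp z hfz.hasFDerivAt).unique
      ((hasFDerivAt_id z).congr_of_eventuallyEq heq)
  have := mem_closure_iff_nhdsWithin_neBot.1 hy
  exact tendsto_nhds_unique ((hcont.tendsto.mono_left nhdsWithin_le_nhds).congr' hloc)
    tendsto_const_nhds

end Slices

section CompactBounds

variable {E F : Type*} [NormedAddCommGroup E] [NormedSpace ℝ E]
  [NormedAddCommGroup F] [NormedSpace ℝ F] {f : ℝ → E → F} {K : Set (ℝ × E)}

theorem IsCompact.exists_pos_bound_fderiv_slice_right (hK : IsCompact K)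
    (hf : ∀ p ∈ K, ContDiffAt ℝ 1 (fun q : ℝ × E => f q.1 q.2) p) :
    ∃ M > 0, ∀ p ∈ K, ‖fderiv ℝ (f p.1) p.2‖ ≤ M := by
  have hcont : ContinuousOn (fun p => fderiv ℝ (fun q : ℝ × E => f q.1 q.2) p ∘L inr ℝ ℝ E) K :=
    fun p hp => ((hf p hp).continuousAt_fderiv one_ne_zero).continuousWithinAt.clm_comp
      continuousWithinAt_const
  obtain ⟨C, hC⟩ := hK.exists_bound_of_continuousOn hcont
  refine ⟨max C 1, by positivity, fun _ hp => ?_⟩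
  rw [((hf _ hp).differentiableAt one_ne_zero).hasFDerivAt.hasFDerivAt_slice_right.fderiv]
  exact (hC _ hp).trans (le_max_left _ _)

theorem IsCompact.exists_pos_forall_norm_deriv_slice_left_sq_le (hK : IsCompact K)
    (hf : ∀ p ∈ K, ContDiffAt ℝ 1 (fun q : ℝ × E => f q.1 q.2) p)
    (hlt : ∀ p ∈ K, ‖deriv (fun s => f s p.2) p.1‖ < 1) :
    ∃ δ > 0, ∀ p ∈ K, ‖deriv (fun s => f s p.2) p.1‖ ^ 2 ≤ 1 - δ := by
  have hderiv : ∀ p ∈ K,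
      deriv (fun s => f s p.2) p.1 = fderiv ℝ (fun q : ℝ × E => f q.1 q.2) p (1, 0) :=
    fun _ hp => ((hf _ hp).differentiableAt one_ne_zero).hasFDerivAt.hasDerivAt_slice_left.deriv
  have hcont : ContinuousOn
      (fun p => 1 - ‖fderiv ℝ (fun q : ℝ × E => f q.1 q.2) p (1, 0)‖ ^ 2) K := fun p hp =>
    continuousWithinAt_const.sub
      ((((hf p hp).continuousAt_fderiv one_ne_zero).continuousWithinAt.clm_apply
        continuousWithinAt_const).norm.pow 2)
  obtain ⟨δ, hδ, hle⟩ := hK.exists_forall_le' hcont (a := 0) fun p hp => by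
    have := hlt p hp
    rw [hderiv p hp] at this
    nlinarith [norm_nonneg (fderiv ℝ (fun q : ℝ × E => f q.1 q.2) p (1, 0))]
  exact ⟨δ, hδ, fun p hp => by rw [hderiv p hp]; linarith [hle p hp]⟩

end CompactBounds

theorem stmt_8_general {N : ℕ} {T : ℝ} (hT : 0 < T)
    (Ω₀ : Set (EuclideanSpace ℝ (Fin N)))
    (Ω : ℝ → Set (EuclideanSpace ℝ (Fin N)))
    (Φ Ψ : ℝ → EuclideanSpace ℝ (Fin N) → EuclideanSpace ℝ (Fin N))
    (hΩ₀ : IsOpen Ω₀) (hΩ₀b : Bornology.IsBounded Ω₀)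
    (hmaps : ∀ t ∈ Set.Icc (0:ℝ) T, Φ t '' Ω₀ = Ω t)
    -- `C¹,¹` regularity of `Φ, Ψ`
    (hΦC1 : ∀ t ∈ Set.Icc (0:ℝ) T, ∀ y ∈ closure Ω₀,
      ContDiffAt ℝ 1 (fun p : ℝ × EuclideanSpace ℝ (Fin N) => Φ p.1 p.2) (t, y))
    (hΨC1 : ∀ t ∈ Set.Icc (0:ℝ) T, ∀ x ∈ closure (Ω t),
      ContDiffAt ℝ 1 (fun p : ℝ × EuclideanSpace ℝ (Fin N) => Ψ p.1 p.2) (t, x))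
    (hΨΦ : ∀ t ∈ Set.Icc (0:ℝ) T, ∀ y ∈ closure Ω₀, Ψ t (Φ t y) = y)
    -- subsonic condition `|∂ₜΦ(t,y)| < 1`
    (hsub : ∀ t ∈ Set.Icc (0:ℝ) T, ∀ y ∈ closure Ω₀,
      ‖deriv (fun s => Φ s y) t‖ < 1) :
    -- symmetry of `B`
    (∀ t ∈ Set.Icc (0:ℝ) T, ∀ y ∈ closure Ω₀,
      ∀ v w : EuclideanSpace ℝ (Fin N),
        ⟪(fderiv ℝ (Ψ t) (Φ t y))
            ((ContinuousLinearMap.adjoint (fderiv ℝ (Ψ t) (Φ t y))) v)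
          - ⟪deriv (fun s => Ψ s (Φ t y)) t, v⟫ • deriv (fun s => Ψ s (Φ t y)) t, w⟫
        = ⟪v, (fderiv ℝ (Ψ t) (Φ t y))
            ((ContinuousLinearMap.adjoint (fderiv ℝ (Ψ t) (Φ t y))) w)
          - ⟪deriv (fun s => Ψ s (Φ t y)) t, w⟫ • deriv (fun s => Ψ s (Φ t y)) t⟫) ∧
    -- uniform ellipticity of `B`
    (∃ c > (0:ℝ), ∀ t ∈ Set.Icc (0:ℝ) T, ∀ y ∈ closure Ω₀,
      ∀ v : EuclideanSpace ℝ (Fin N),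
        c * ‖v‖^2 ≤
        ⟪(fderiv ℝ (Ψ t) (Φ t y))
            ((ContinuousLinearMap.adjoint (fderiv ℝ (Ψ t) (Φ t y))) v)
          - ⟪deriv (fun s => Ψ s (Φ t y)) t, v⟫ • deriv (fun s => Ψ s (Φ t y)) t, v⟫) := by
  refine ⟨fun t _ y _ v w => inner_apply_adjoint_sub_smul_comm _ _ v w, ?_⟩
  have hK : IsCompact (Icc 0 T ×ˢ closure Ω₀) := isCompact_Icc.prod hΩ₀b.isCompact_closure
  have hΦK : ∀ p ∈ Icc 0 T ×ˢ closure Ω₀,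
      ContDiffAt ℝ 1 (fun q : ℝ × EuclideanSpace ℝ (Fin N) => Φ q.1 q.2) p :=
    fun p hp => hΦC1 p.1 hp.1 p.2 hp.2
  obtain ⟨M, hM, hPM⟩ := hK.exists_pos_bound_fderiv_slice_right hΦK
  obtain ⟨δ, hδ, hwδ⟩ :=
    hK.exists_pos_forall_norm_deriv_slice_left_sq_le hΦK fun p hp => hsub p.1 hp.1 p.2 hp.2
  refine ⟨δ / M ^ 2, by positivity, fun t ht y hy v => ?_⟩
  have hΦ := hΦC1 t ht y hy
  have hΦy : Φ t y ∈ closure (Ω t) :=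
    hΦ.slice_right.continuousAt.continuousWithinAt.mem_closure hy fun z hz =>
      hmaps t ht ▸ mem_image_of_mem _ hz
  have hΨ := hΨC1 t ht _ hΦy
  have hDP := fderiv_comp_fderiv_eq_id_of_leftInvOn hΩ₀
    (fun z hz => hΨΦ t ht z (subset_closure hz)) hy hΦ.slice_right hΨ.slice_right
  have hu := deriv_eq_neg_fderiv_deriv_of_leftInverse (uniqueDiffOn_Icc hT t ht) ht
    (fun r hr => hΨΦ r hr y hy) (hΨ.differentiableAt one_ne_zero)
    (hΦ.differentiableAt one_ne_zero).hasFDerivAt.hasDerivAt_slice_left.differentiableAt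
  exact div_sq_mul_norm_sq_le_inner_apply_adjoint_sub_smul hDP hu hδ.le (hwδ (t, y) ⟨ht, hy⟩) hM
    (hPM (t, y) ⟨ht, hy⟩) v

/-- The matrix `B(t,y) = DΨ(t,Φ(t,y)) DΨ(t,Φ(t,y))ᵀ − ∂ₜΨ(t,Φ(t,y)) ⊗ ∂ₜΨ(t,Φ(t,y))`
is symmetric, and under the subsonic condition `|∂ₜΦ| < 1` it is uniformly elliptic. -/
theorem stmt_8 {N : ℕ} {T : ℝ} (hT : 0 < T)
    (Ω₀ : Set (EuclideanSpace ℝ (Fin N)))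
    (Ω : ℝ → Set (EuclideanSpace ℝ (Fin N)))
    (Φ Ψ : ℝ → EuclideanSpace ℝ (Fin N) → EuclideanSpace ℝ (Fin N))
    (hΩ₀ : IsOpen Ω₀) (hΩ₀b : Bornology.IsBounded Ω₀)
    (hΩ : ∀ t ∈ Set.Icc (0:ℝ) T, IsOpen (Ω t))
    (hmaps : ∀ t ∈ Set.Icc (0:ℝ) T, Φ t '' Ω₀ = Ω t)
    -- `C¹,¹` regularity of `Φ, Ψ`
    (hΦC1 : ∀ t ∈ Set.Icc (0:ℝ) T, ∀ y ∈ closure Ω₀,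
      ContDiffAt ℝ 1 (fun p : ℝ × EuclideanSpace ℝ (Fin N) => Φ p.1 p.2) (t, y))
    (hΦLip : ∃ L, LipschitzOnWith L
      (fderiv ℝ (fun p : ℝ × EuclideanSpace ℝ (Fin N) => Φ p.1 p.2))
      (Set.Icc (0:ℝ) T ×ˢ closure Ω₀))
    (hΨC1 : ∀ t ∈ Set.Icc (0:ℝ) T, ∀ x ∈ closure (Ω t),
      ContDiffAt ℝ 1 (fun p : ℝ × EuclideanSpace ℝ (Fin N) => Ψ p.1 p.2) (t, x))
    (hΨLip : ∃ L, LipschitzOnWith L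
      (fderiv ℝ (fun p : ℝ × EuclideanSpace ℝ (Fin N) => Ψ p.1 p.2))
      {p : ℝ × EuclideanSpace ℝ (Fin N) | p.1 ∈ Set.Icc (0:ℝ) T ∧ p.2 ∈ closure (Ω p.1)})
    (hΦΨ : ∀ t ∈ Set.Icc (0:ℝ) T, ∀ x ∈ closure (Ω t), Φ t (Ψ t x) = x)
    (hΨΦ : ∀ t ∈ Set.Icc (0:ℝ) T, ∀ y ∈ closure Ω₀, Ψ t (Φ t y) = y)
    -- subsonic condition `|∂ₜΦ(t,y)| < 1`
    (hsub : ∀ t ∈ Set.Icc (0:ℝ) T, ∀ y ∈ closure Ω₀,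
      ‖deriv (fun s => Φ s y) t‖ < 1) :
    -- symmetry of `B`
    (∀ t ∈ Set.Icc (0:ℝ) T, ∀ y ∈ closure Ω₀,
      ∀ v w : EuclideanSpace ℝ (Fin N),
        ⟪(fderiv ℝ (Ψ t) (Φ t y))
            ((ContinuousLinearMap.adjoint (fderiv ℝ (Ψ t) (Φ t y))) v)
          - ⟪deriv (fun s => Ψ s (Φ t y)) t, v⟫ • deriv (fun s => Ψ s (Φ t y)) t, w⟫
        = ⟪v, (fderiv ℝ (Ψ t) (Φ t y))
            ((ContinuousLinearMap.adjoint (fderiv ℝ (Ψ t) (Φ t y))) w)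
          - ⟪deriv (fun s => Ψ s (Φ t y)) t, w⟫ • deriv (fun s => Ψ s (Φ t y)) t⟫) ∧
    -- uniform ellipticity of `B`
    (∃ c > (0:ℝ), ∀ t ∈ Set.Icc (0:ℝ) T, ∀ y ∈ closure Ω₀,
      ∀ v : EuclideanSpace ℝ (Fin N),
        c * ‖v‖^2 ≤
        ⟪(fderiv ℝ (Ψ t) (Φ t y))
            ((ContinuousLinearMap.adjoint (fderiv ℝ (Ψ t) (Φ t y))) v)
          - ⟪deriv (fun s => Ψ s (Φ t y)) t, v⟫ • deriv (fun s => Ψ s (Φ t y)) t, v⟫) :=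
  stmt_8_general hT Ω₀ Ω Φ Ψ hΩ₀ hΩ₀b hmaps hΦC1 hΨC1 hΨΦ hsub
end

section
/- Equivalence of Griffith's criterion, the maximum dissipation principle, and the explicit speed law: let κ: ℝᴺ → (0,∞) be continuous, let G_α(t,x) := ½(1−α²)(∂u/∂ν_{Ωₜ}(t,x))² for α ∈ [0,1), and suppose that on ∂Ωₜ one has u̇ + ω·∂u/∂ν_{Ωₜ} = 0. Then for a.e. t and ℋ^{N−1}-a.e. x ∈ ∂Ωₜ, the following are equivalent: (i) ω(t,x) = max{α ∈ [0,1) : α κ(x) = α G_α(t,x)}; (ii) 0 ≤ ω(t,x) < 1, G_{ω(t,x)}(t,x) ≤ κ(x), and ω(t,x)[G_{ω(t,x)}(t,x) − κ(x)] = 0; (iii) ω(t,x) = √(1 − 2κ(x)/(∂u/∂ν_{Ωₜ})²) if (∂u/∂ν_{Ωₜ})² > 2κ(x), and ω(t,x) = 0 otherwise. -/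
open MeasureTheory Set
noncomputable section

/-!
Everything is pointwise algebra. For `α > 0` the constraint `α κ = α G_α` reads `G_α = κ`,
i.e. `(1 - α²) (∂u/∂ν)² = 2κ`, which has a solution `α ∈ (0, 1)` exactly when `(∂u/∂ν)² > 2κ`,
namely `α = √(1 - 2κ/(∂u/∂ν)²)`. So the explicit speed is the greatest element of the set in (i),
and it is also the only value satisfying Griffith's criterion (ii): `ω = 0` is allowed only when
`G_0 = (∂u/∂ν)²/2 ≤ κ`.
-/

/-- `G_α` for a normal derivative `d`. -/
def energyReleaseRate (α d : ℝ) : ℝ := (1 - α ^ 2) / 2 * d ^ 2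

def griffithSpeed (d k : ℝ) : ℝ := if d ^ 2 > 2 * k then √(1 - 2 * k / d ^ 2) else 0

def GriffithCriterion (d k ω : ℝ) : Prop :=
  0 ≤ ω ∧ ω < 1 ∧ energyReleaseRate ω d ≤ k ∧ ω * (energyReleaseRate ω d - k) = 0

def dissipationSet (d k : ℝ) : Set ℝ :=
  {α | α ∈ Ico 0 1 ∧ α * k = α * energyReleaseRate α d}

section

variable {d k α : ℝ}

theorem energyReleaseRate_zero : energyReleaseRate 0 d = d ^ 2 / 2 := by
  simp only [energyReleaseRate]; ring

theorem griffithSpeed_of_le (h : d ^ 2 ≤ 2 * k) : griffithSpeed d k = 0 :=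
  if_neg h.not_gt

theorem griffithSpeed_nonneg : 0 ≤ griffithSpeed d k := by
  unfold griffithSpeed; split_ifs
  · exact Real.sqrt_nonneg _
  · exact le_rfl

theorem griffithSpeed_lt_one (hk : 0 < k) : griffithSpeed d k < 1 := by
  unfold griffithSpeed; split_ifs with h
  · have hd : 0 < d ^ 2 := by linarith
    rw [Real.sqrt_lt' one_pos, one_pow, sub_lt_self_iff]
    positivity
  · exact one_pos

theorem energyReleaseRate_griffithSpeed (hk : 0 ≤ k) (h : 2 * k < d ^ 2) :
    energyReleaseRate (griffithSpeed d k) d = k := by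
  have hd : d ≠ 0 := by rintro rfl; linarith
  have hle : 2 * k / d ^ 2 ≤ 1 := (div_le_one (by positivity)).2 h.le
  rw [griffithSpeed, if_pos h, energyReleaseRate, Real.sq_sqrt (sub_nonneg.2 hle)]
  field_simp
  ring

theorem eq_griffithSpeed_of_energyReleaseRate_eq (hk : 0 < k) (hα : 0 ≤ α)
    (h : energyReleaseRate α d = k) : α = griffithSpeed d k := by
  rw [energyReleaseRate] at h
  have hd0 : d ≠ 0 := by rintro rfl; rw [zero_pow two_ne_zero, mul_zero] at h; exact hk.ne h
  have hd : 0 < d ^ 2 := by positivity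
  by_cases hlt : d ^ 2 > 2 * k
  · rw [griffithSpeed, if_pos hlt, eq_comm, Real.sqrt_eq_iff_eq_sq (by
      rw [sub_nonneg, div_le_one hd]; exact hlt.le) hα, ← h]
    field_simp
    ring
  · rw [griffithSpeed_of_le (not_lt.1 hlt)]
    have hα2 : α ^ 2 * d ^ 2 ≤ 0 * d ^ 2 := by linarith
    exact (pow_eq_zero_iff two_ne_zero).1 <|
      le_antisymm (le_of_mul_le_mul_right hα2 hd) (sq_nonneg α)

theorem griffithCriterion_iff (hk : 0 < k) {ω : ℝ} :
    GriffithCriterion d k ω ↔ ω = griffithSpeed d k := by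
  constructor
  · rintro ⟨hω, -, hle, hcompl⟩
    rcases mul_eq_zero.1 hcompl with rfl | hG
    · rw [energyReleaseRate_zero] at hle
      exact (griffithSpeed_of_le (by linarith)).symm
    · exact eq_griffithSpeed_of_energyReleaseRate_eq hk hω (sub_eq_zero.1 hG)
  · rintro rfl
    refine ⟨griffithSpeed_nonneg, griffithSpeed_lt_one hk, ?_⟩
    by_cases h : 2 * k < d ^ 2
    · rw [energyReleaseRate_griffithSpeed hk.le h]
      exact ⟨le_rfl, by rw [sub_self, mul_zero]⟩
    · rw [griffithSpeed_of_le (not_lt.1 h), energyReleaseRate_zero]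
      exact ⟨by linarith, zero_mul _⟩

theorem GriffithCriterion.mem_dissipationSet {ω : ℝ} (h : GriffithCriterion d k ω) :
    ω ∈ dissipationSet d k :=
  ⟨⟨h.1, h.2.1⟩, by linear_combination -h.2.2.2⟩

theorem isGreatest_dissipationSet (hk : 0 < k) :
    IsGreatest (dissipationSet d k) (griffithSpeed d k) := by
  refine ⟨((griffithCriterion_iff hk).2 rfl).mem_dissipationSet, ?_⟩
  rintro α ⟨⟨hα, -⟩, hdiss⟩
  rcases hα.eq_or_lt with rfl | hpos
  · exact griffithSpeed_nonneg
  · exact (eq_griffithSpeed_of_energyReleaseRate_eq hk hα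
      (mul_left_cancel₀ hpos.ne' hdiss).symm).le

theorem isGreatest_dissipationSet_iff_griffithCriterion (hk : 0 < k) {ω : ℝ} :
    IsGreatest (dissipationSet d k) ω ↔ GriffithCriterion d k ω :=
  (isGreatest_dissipationSet hk).isGreatest_iff_eq.trans
    (eq_comm.trans (griffithCriterion_iff hk).symm)

end

/-- `Dn t x` stands for `∂u/∂ν_{Ωₜ}(t,x)` and `ω` for the normal velocity of `∂Ωₜ`. -/
theorem stmt_16_general {N : ℕ} {T : ℝ}
    (Ω : ℝ → Set (EuclideanSpace ℝ (Fin N)))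
    (Dn ω : ℝ → EuclideanSpace ℝ (Fin N) → ℝ)
    (κ : EuclideanSpace ℝ (Fin N) → ℝ)
    (hκpos : ∀ x, 0 < κ x) :
    ∀ t ∈ Set.Icc (0:ℝ) T,
      ∀ᵐ x ∂(μH[(N : ℝ) - 1].restrict (frontier (Ω t))),
        -- (i) maximum dissipation principle ↔ (ii) Griffith's criterion
        ((IsGreatest {α : ℝ | α ∈ Set.Ico (0:ℝ) 1 ∧
            α * κ x = α * ((1 - α^2) / 2 * (Dn t x)^2)} (ω t x))
          ↔
          (0 ≤ ω t x ∧ ω t x < 1 ∧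
            (1 - (ω t x)^2) / 2 * (Dn t x)^2 ≤ κ x ∧
            ω t x * ((1 - (ω t x)^2) / 2 * (Dn t x)^2 - κ x) = 0))
        ∧
        -- (ii) Griffith's criterion ↔ (iii) explicit speed law
        ((0 ≤ ω t x ∧ ω t x < 1 ∧
            (1 - (ω t x)^2) / 2 * (Dn t x)^2 ≤ κ x ∧
            ω t x * ((1 - (ω t x)^2) / 2 * (Dn t x)^2 - κ x) = 0)
          ↔
          (ω t x = if (Dn t x)^2 > 2 * κ x
            then Real.sqrt (1 - 2 * κ x / (Dn t x)^2) else 0)) := by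
  intro t _
  exact Filter.Eventually.of_forall fun x =>
    ⟨isGreatest_dissipationSet_iff_griffithCriterion (hκpos x),
      griffithCriterion_iff (hκpos x)⟩

/-- Equivalence of Griffith's criterion, the maximum dissipation principle and the
explicit speed law. Here `Dn t x = ∂u/∂ν_{Ωₜ}(t,x)`, `udot` is `u̇` on the boundary,
`ω` the scalar normal velocity, `κ` the (positive continuous) toughness, and
`G_α = ½(1−α²)(∂u/∂ν)²` the dynamic energy release rate density. -/
theorem stmt_16 {N : ℕ} {T : ℝ} (hT : 0 < T)
    (Ω : ℝ → Set (EuclideanSpace ℝ (Fin N)))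
    (Dn udot ω : ℝ → EuclideanSpace ℝ (Fin N) → ℝ)
    (κ : EuclideanSpace ℝ (Fin N) → ℝ)
    (hκcont : Continuous κ) (hκpos : ∀ x, 0 < κ x)
    -- kinematic relation `u̇ + ω ∂u/∂ν = 0` on `∂Ωₜ`
    (hkin : ∀ t ∈ Set.Icc (0:ℝ) T,
      ∀ᵐ x ∂(μH[(N : ℝ) - 1].restrict (frontier (Ω t))),
        udot t x + ω t x * Dn t x = 0) :
    ∀ t ∈ Set.Icc (0:ℝ) T,
      ∀ᵐ x ∂(μH[(N : ℝ) - 1].restrict (frontier (Ω t))),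
        -- (i) maximum dissipation principle ↔ (ii) Griffith's criterion
        ((IsGreatest {α : ℝ | α ∈ Set.Ico (0:ℝ) 1 ∧
            α * κ x = α * ((1 - α^2) / 2 * (Dn t x)^2)} (ω t x))
          ↔
          (0 ≤ ω t x ∧ ω t x < 1 ∧
            (1 - (ω t x)^2) / 2 * (Dn t x)^2 ≤ κ x ∧
            ω t x * ((1 - (ω t x)^2) / 2 * (Dn t x)^2 - κ x) = 0))
        ∧
        -- (ii) Griffith's criterion ↔ (iii) explicit speed law
        ((0 ≤ ω t x ∧ ω t x < 1 ∧
            (1 - (ω t x)^2) / 2 * (Dn t x)^2 ≤ κ x ∧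
            ω t x * ((1 - (ω t x)^2) / 2 * (Dn t x)^2 - κ x) = 0)
          ↔
          (ω t x = if (Dn t x)^2 > 2 * κ x
            then Real.sqrt (1 - 2 * κ x / (Dn t x)^2) else 0)) :=
  stmt_16_general Ω Dn ω κ hκpos
end
end
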